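/- arXiv:1802.09199 — 3 statements merged into one kernel-verified Lean document; each statement's English description precedes it below -/
import Mathlib

section
/- Let (Alo, Ahi) be an interval m×n matrix, (blo, bhi) an interval vector in ℝ^m, and (𝒜, β) a quantifier pattern. For every x ∈ ℝ^n: x is an AE-solution of the interval-quantifier system of inequalities A x ≥ b (all rows are '≥') if and only if for every row i one has L_i(x) ≥ r_i. -/
/-!
Each row of `A x ≥ b` is separable in its entries, so the quantifiers can be resolved entry by
entry. The adversary controls the `∀`-entries and picks, among `Alo i j` and `Ahi i j`, the
one minimising `A i j * x j`, and picks `b i = bhi i`; we control the `∃`-entries and pick the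
endpoint maximising `A i j * x j`, and `b i = blo i`. Row `i` survives this worst case exactly when
`L_i(x) ≥ r_i`, and then it survives every other choice of the adversary as well.
-/

open Finset

/-- A real matrix `A` lies in the interval matrix `(Alo, Ahi)`. -/
def memIM {m n : ℕ} (Alo Ahi A : Matrix (Fin m) (Fin n) ℝ) : Prop :=
  ∀ i j, Alo i j ≤ A i j ∧ A i j ≤ Ahi i j

/-- A real vector `b` lies in the interval vector `(blo, bhi)`. -/
def memIV {m : ℕ} (blo bhi b : Fin m → ℝ) : Prop :=
  ∀ i, blo i ≤ b i ∧ b i ≤ bhi i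

/-- `x` is an AE-solution of the interval-quantifier system `A x rel b`.
The quantifier pattern is given by `qA : Fin m → Fin n → Bool` and
`qb : Fin m → Bool`, where `true` stands for the label "∀" and `false`
for the label "∃". -/
def AESol {m n : ℕ} (Alo Ahi : Matrix (Fin m) (Fin n) ℝ) (blo bhi : Fin m → ℝ)
    (qA : Fin m → Fin n → Bool) (qb : Fin m → Bool)
    (rel : Fin m → ℝ → ℝ → Prop) (x : Fin n → ℝ) : Prop :=
  ∀ A' b', memIM Alo Ahi A' → memIV blo bhi b' →
    ∃ A b, memIM Alo Ahi A ∧ memIV blo bhi b ∧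
      (∀ i j, qA i j = true → A i j = A' i j) ∧
      (∀ i, qb i = true → b i = b' i) ∧
      ∀ i, rel i (∑ j, A i j * x j) (b i)

section IntervalProduct

variable {α : Type*} [Ring α] [LinearOrder α] [IsOrderedRing α]

theorem min_mul_le_mul_of_mem_Icc {lo hi t : α} (ht : t ∈ Set.Icc lo hi) (y : α) :
    min (lo * y) (hi * y) ≤ t * y := by
  rcases le_total 0 y with hy | hy
  · exact (min_le_left _ _).trans (mul_le_mul_of_nonneg_right ht.1 hy)
  · exact (min_le_right _ _).trans (mul_le_mul_of_nonpos_right ht.2 hy)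

theorem mul_le_max_mul_of_mem_Icc {lo hi t : α} (ht : t ∈ Set.Icc lo hi) (y : α) :
    t * y ≤ max (lo * y) (hi * y) := by
  rcases le_total 0 y with hy | hy
  · exact (mul_le_mul_of_nonneg_right ht.2 hy).trans (le_max_right _ _)
  · exact (mul_le_mul_of_nonpos_right ht.1 hy).trans (le_max_left _ _)

end IntervalProduct

theorem exists_mem_Icc_mul_eq_min {α : Type*} [Mul α] [LinearOrder α] {lo hi : α}
    (h : lo ≤ hi) (y : α) :
    ∃ t ∈ Set.Icc lo hi, t * y = min (lo * y) (hi * y) := by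
  rcases min_choice (lo * y) (hi * y) with hmin | hmin
  · exact ⟨lo, Set.left_mem_Icc.2 h, hmin.symm⟩
  · exact ⟨hi, Set.right_mem_Icc.2 h, hmin.symm⟩

theorem exists_mem_Icc_mul_eq_max {α : Type*} [Mul α] [LinearOrder α] {lo hi : α}
    (h : lo ≤ hi) (y : α) :
    ∃ t ∈ Set.Icc lo hi, t * y = max (lo * y) (hi * y) := by
  rcases max_choice (lo * y) (hi * y) with hmax | hmax
  · exact ⟨lo, Set.left_mem_Icc.2 h, hmax.symm⟩
  · exact ⟨hi, Set.right_mem_Icc.2 h, hmax.symm⟩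

section IntervalMembership

variable {m n : ℕ} {Alo Ahi : Matrix (Fin m) (Fin n) ℝ} {blo bhi : Fin m → ℝ}

theorem memIM_ite {A B : Matrix (Fin m) (Fin n) ℝ} (hA : memIM Alo Ahi A)
    (hB : memIM Alo Ahi B) (p : Fin m → Fin n → Bool) :
    memIM Alo Ahi (fun i j => if p i j then A i j else B i j) := by
  intro i j
  dsimp only
  split_ifs
  exacts [hA i j, hB i j]

theorem memIV_ite {b c : Fin m → ℝ} (hb : memIV blo bhi b) (hc : memIV blo bhi c)
    (p : Fin m → Bool) : memIV blo bhi (fun i => if p i then b i else c i) := by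
  intro i
  dsimp only
  split_ifs
  exacts [hb i, hc i]

theorem memIV_left (h : ∀ i, blo i ≤ bhi i) : memIV blo bhi blo :=
  fun i => ⟨le_rfl, h i⟩

theorem memIV_right (h : ∀ i, blo i ≤ bhi i) : memIV blo bhi bhi :=
  fun i => ⟨h i, le_rfl⟩

theorem exists_memIM_mul_eq_min (h : ∀ i j, Alo i j ≤ Ahi i j) (x : Fin n → ℝ) :
    ∃ A, memIM Alo Ahi A ∧ ∀ i j, A i j * x j = min (Alo i j * x j) (Ahi i j * x j) := by
  choose A hA hAx using fun i j => exists_mem_Icc_mul_eq_min (h i j) (x j)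
  exact ⟨A, hA, hAx⟩

theorem exists_memIM_mul_eq_max (h : ∀ i j, Alo i j ≤ Ahi i j) (x : Fin n → ℝ) :
    ∃ A, memIM Alo Ahi A ∧ ∀ i j, A i j * x j = max (Alo i j * x j) (Ahi i j * x j) := by
  choose A hA hAx using fun i j => exists_mem_Icc_mul_eq_max (h i j) (x j)
  exact ⟨A, hA, hAx⟩

end IntervalMembership

theorem stmt1 (m n : ℕ) (Alo Ahi : Matrix (Fin m) (Fin n) ℝ) (blo bhi : Fin m → ℝ)
    (hA : ∀ i j, Alo i j ≤ Ahi i j) (hb : ∀ i, blo i ≤ bhi i)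
    (qA : Fin m → Fin n → Bool) (qb : Fin m → Bool) (x : Fin n → ℝ) :
    AESol Alo Ahi blo bhi qA qb (fun _ a b => a ≥ b) x ↔
    ∀ i,
      (∑ j, if qA i j then min (Alo i j * x j) (Ahi i j * x j)
              else max (Alo i j * x j) (Ahi i j * x j)) ≥ (if qb i then bhi i else blo i) := by
  constructor
  · intro hsol i
    obtain ⟨Aworst, hAworst, hAworst_eq⟩ := exists_memIM_mul_eq_min hA x
    obtain ⟨A, b, hAmem, hbmem, hAfix, hbfix, hrow⟩ :=
      hsol Aworst bhi hAworst (memIV_right hb)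
    calc (if qb i then bhi i else blo i)
        ≤ b i := by split_ifs with hq; exacts [(hbfix i hq).ge, (hbmem i).1]
      _ ≤ ∑ j, A i j * x j := hrow i
      _ ≤ _ := sum_le_sum fun j _ => by
        split_ifs with hq
        exacts [(hAfix i j hq ▸ hAworst_eq i j).le, mul_le_max_mul_of_mem_Icc (hAmem i j) _]
  · intro hL A' b' hA' hb'
    obtain ⟨Abest, hAbest, hAbest_eq⟩ := exists_memIM_mul_eq_max hA x
    refine ⟨fun i j => if qA i j then A' i j else Abest i j,
      fun i => if qb i then b' i else blo i, memIM_ite hA' hAbest qA,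
      memIV_ite hb' (memIV_left hb) qb, fun i j hq => if_pos hq, fun i hq => if_pos hq,
      fun i => ?_⟩
    calc (if qb i then b' i else blo i)
        ≤ (if qb i then bhi i else blo i) := by split_ifs; exacts [(hb' i).2, le_rfl]
      _ ≤ _ := hL i
      _ ≤ _ := sum_le_sum fun j _ => by
        dsimp only
        split_ifs with hq
        exacts [min_mul_le_mul_of_mem_Icc (hA' i j) _, (hAbest_eq i j).ge]
end

section
/- Let (Alo, Ahi) be an interval m×n matrix, (blo, bhi) an interval vector in ℝ^m, and (𝒜, β) a quantifier pattern. For every x ∈ ℝ^n: x is an AE-solution of the interval-quantifier system of inequalities A x ≥ b if and only if for every row i, b̌_i − Σ_j Ǎ_{ij} x_j ≤ Σ_j 𝒜^s_{ij} Â_{ij} |x_j| + β^s_i b̂_i. -/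
/-!
Every entry of the row expression `∑ⱼ Aᵢⱼ xⱼ - bᵢ` can be chosen independently, so the
universal player's best move is the endpoint of `[lo, hi]` minimizing `a * x`, the existential
player's best reply the endpoint maximizing it, and these extremes are `Ǎ x ∓ Â |x|`. Writing
`-bᵢ = bᵢ * (-1)` treats the right-hand side as one more column, with `x = -1`.
-/

open Finset

open Set

noncomputable section IntervalEntry

variable {lo hi a x : ℝ}

def argminMul (lo hi x : ℝ) : ℝ := if 0 ≤ x then lo else hi

def argmaxMul (lo hi x : ℝ) : ℝ := if 0 ≤ x then hi else lo

/-- The minimum of `a * x` over `a ∈ [lo, hi]` if `q` (label "∀"), its maximum otherwise. -/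
def aeExtremum (lo hi : ℝ) (q : Bool) (x : ℝ) : ℝ :=
  (lo + hi) / 2 * x + (if q then -1 else 1) * ((hi - lo) / 2) * |x|

lemma argminMul_mem (h : lo ≤ hi) : argminMul lo hi x ∈ Icc lo hi := by
  unfold argminMul; split_ifs <;> simp [h]

lemma argmaxMul_mem (h : lo ≤ hi) : argmaxMul lo hi x ∈ Icc lo hi := by
  unfold argmaxMul; split_ifs <;> simp [h]

lemma argminMul_mul : argminMul lo hi x * x = (lo + hi) / 2 * x - (hi - lo) / 2 * |x| := by
  unfold argminMul
  split_ifs with h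
  · rw [abs_of_nonneg h]; ring
  · rw [abs_of_neg (not_le.mp h)]; ring

lemma argmaxMul_mul : argmaxMul lo hi x * x = (lo + hi) / 2 * x + (hi - lo) / 2 * |x| := by
  unfold argmaxMul
  split_ifs with h
  · rw [abs_of_nonneg h]; ring
  · rw [abs_of_neg (not_le.mp h)]; ring

lemma abs_mul_sub_midpoint_mul_le (ha : a ∈ Icc lo hi) :
    |a * x - (lo + hi) / 2 * x| ≤ (hi - lo) / 2 * |x| := by
  rw [← sub_mul, abs_mul]
  exact mul_le_mul_of_nonneg_right (abs_le.mpr ⟨by linarith [ha.1], by linarith [ha.2]⟩)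
    (abs_nonneg x)

lemma mul_le_aeExtremum {q : Bool} (ha : a ∈ Icc lo hi)
    (hq : q = true → a = argminMul lo hi x) : a * x ≤ aeExtremum lo hi q x := by
  cases q <;> simp only [aeExtremum, Bool.false_eq_true, ↓reduceIte]
  · linarith [(abs_le.mp (abs_mul_sub_midpoint_mul_le (x := x) ha)).2]
  · rw [hq rfl, argminMul_mul]; linarith

lemma aeExtremum_le_mul {q : Bool} (ha : a ∈ Icc lo hi)
    (hq : q = false → a = argmaxMul lo hi x) : aeExtremum lo hi q x ≤ a * x := by
  cases q <;> simp only [aeExtremum, Bool.false_eq_true, ↓reduceIte]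
  · rw [hq rfl, argmaxMul_mul]; linarith
  · linarith [(abs_le.mp (abs_mul_sub_midpoint_mul_le (x := x) ha)).1]

end IntervalEntry

lemma sum_aeExtremum_nonneg_iff {ι : Type*} [Fintype ι] (lo hi x : ι → ℝ) (q : ι → Bool)
    (blo bhi : ℝ) (qb : Bool) :
    (blo + bhi) / 2 - ∑ j, ((lo j + hi j) / 2) * x j ≤
        (∑ j, (if q j then (-1 : ℝ) else 1) * ((hi j - lo j) / 2) * |x j|) +
          (if qb then (-1 : ℝ) else 1) * ((bhi - blo) / 2) ↔
      0 ≤ ∑ j, aeExtremum (lo j) (hi j) (q j) (x j) + aeExtremum blo bhi qb (-1) := by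
  simp only [aeExtremum, sum_add_distrib, abs_neg, abs_one, mul_one]
  constructor <;> intro h <;> linarith

theorem stmt8 (m n : ℕ) (Alo Ahi : Matrix (Fin m) (Fin n) ℝ) (blo bhi : Fin m → ℝ)
    (hA : ∀ i j, Alo i j ≤ Ahi i j) (hb : ∀ i, blo i ≤ bhi i)
    (qA : Fin m → Fin n → Bool) (qb : Fin m → Bool) (x : Fin n → ℝ) :
    AESol Alo Ahi blo bhi qA qb (fun _ a b => a ≥ b) x ↔
    ∀ i,
      (blo i + bhi i) / 2 - ∑ j, ((Alo i j + Ahi i j) / 2) * x j ≤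
        (∑ j, (if qA i j then (-1 : ℝ) else 1) * ((Ahi i j - Alo i j) / 2) * |x j|) +
          (if qb i then (-1 : ℝ) else 1) * ((bhi i - blo i) / 2) := by
  simp only [sum_aeExtremum_nonneg_iff]
  constructor
  · intro hsol i
    obtain ⟨A, b, hAmem, hbmem, hqA, hqb, hrow⟩ :=
      hsol (fun i j => argminMul (Alo i j) (Ahi i j) (x j))
        (fun i => argminMul (blo i) (bhi i) (-1))
        (fun i j => argminMul_mem (hA i j)) (fun i => argminMul_mem (hb i))
    have hAx := sum_le_sum fun j (_ : j ∈ Finset.univ) => mul_le_aeExtremum (hAmem i j) (hqA i j)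
    have hbx := mul_le_aeExtremum (x := -1) (hbmem i) (hqb i)
    linarith [hrow i]
  · intro hcrit A' b' hA' hb'
    set A := fun i j => if qA i j then A' i j else argmaxMul (Alo i j) (Ahi i j) (x j)
    set b := fun i => if qb i then b' i else argmaxMul (blo i) (bhi i) (-1)
    have hAmem : memIM Alo Ahi A := fun i j => by
      by_cases hq : qA i j <;> simp only [A, hq, ↓reduceIte]
      exacts [hA' i j, argmaxMul_mem (hA i j)]
    have hbmem : memIV blo bhi b := fun i => by
      by_cases hq : qb i <;> simp only [b, hq, ↓reduceIte]
      exacts [hb' i, argmaxMul_mem (hb i)]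
    refine ⟨A, b, hAmem, hbmem, fun i j hq => if_pos hq, fun i hq => if_pos hq, fun i => ?_⟩
    have hAx := sum_le_sum fun j (_ : j ∈ Finset.univ) =>
      aeExtremum_le_mul (q := qA i j) (x := x j) (hAmem i j) (fun hq => by simp [A, hq])
    have hbx := aeExtremum_le_mul (q := qb i) (x := -1) (hbmem i) (fun hq => by simp [b, hq])
    linarith [hcrit i]
end

section
/- (Gerlach's characterization of weak solutions of interval inequalities.) Let (Alo, Ahi) be an interval m×n matrix and (blo, bhi) an interval vector in ℝ^m. For every x ∈ ℝ^n: there exist a matrix A lying in the interval matrix and a vector b lying in the interval vector with Σ_j A_{ij} x_j ≤ b_i for every i, if and only if for every row i, Σ_j Ǎ_{ij} x_j − b̌_i ≤ Σ_j Â_{ij} |x_j| + b̂_i. -/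
open Finset

/-
Over `a ∈ [lo, hi]` the product `a * t` is minimised at `a = lo` for `t ≥ 0` and at `a = hi`
for `t < 0`, with minimum `ǎ t - â |t|` in midpoint–radius form. Summing over a row, the
system is weakly solvable at `x` iff, in every row, the smallest attainable left-hand side
`Ǎᵢ x - Âᵢ |x|` is at most the largest attainable right-hand side `b̌ᵢ + b̂ᵢ`.
-/

lemma mid_mul_sub_rad_mul_abs_le {lo hi a : ℝ} (t : ℝ) (hlo : lo ≤ a) (hhi : a ≤ hi) :
    (lo + hi) / 2 * t - (hi - lo) / 2 * |t| ≤ a * t := by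
  rcases abs_cases t with ⟨ht, hsign⟩ | ⟨ht, hsign⟩ <;> rw [ht] <;> nlinarith

lemma ite_nonneg_mul_eq_mid_mul_sub_rad_mul_abs (lo hi t : ℝ) :
    (if 0 ≤ t then lo else hi) * t = (lo + hi) / 2 * t - (hi - lo) / 2 * |t| := by
  split_ifs with ht
  · rw [abs_of_nonneg ht]; ring
  · rw [abs_of_neg (not_le.mp ht)]; ring

section Rows

variable {ι : Type*} [Fintype ι] (lo hi x : ι → ℝ)

lemma sum_mid_mul_sub_sum_rad_mul_abs_le {a : ι → ℝ} (ha : ∀ j, lo j ≤ a j ∧ a j ≤ hi j) :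
    ∑ j, (lo j + hi j) / 2 * x j - ∑ j, (hi j - lo j) / 2 * |x j| ≤ ∑ j, a j * x j := by
  rw [← sum_sub_distrib]
  exact sum_le_sum fun j _ => mid_mul_sub_rad_mul_abs_le (x j) (ha j).1 (ha j).2

lemma sum_ite_nonneg_mul_eq :
    ∑ j, (if 0 ≤ x j then lo j else hi j) * x j =
      ∑ j, (lo j + hi j) / 2 * x j - ∑ j, (hi j - lo j) / 2 * |x j| := by
  simp only [ite_nonneg_mul_eq_mid_mul_sub_rad_mul_abs, sum_sub_distrib]

end Rows

theorem stmt17 (m n : ℕ) (Alo Ahi : Matrix (Fin m) (Fin n) ℝ) (blo bhi : Fin m → ℝ)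
    (hA : ∀ i j, Alo i j ≤ Ahi i j) (hb : ∀ i, blo i ≤ bhi i)
    (x : Fin n → ℝ) :
    (∃ A b, memIM Alo Ahi A ∧ memIV blo bhi b ∧ ∀ i, ∑ j, A i j * x j ≤ b i) ↔
    ∀ i, (∑ j, ((Alo i j + Ahi i j) / 2) * x j - (blo i + bhi i) / 2) ≤ (∑ j, ((Ahi i j - Alo i j) / 2) * |x j|) + (bhi i - blo i) / 2 := by
  constructor
  · rintro ⟨A, b, hAmem, hbmem, hsol⟩ i
    have hrow := sum_mid_mul_sub_sum_rad_mul_abs_le (Alo i) (Ahi i) x (hAmem i)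
    linarith [hsol i, (hbmem i).2]
  · intro hrows
    refine ⟨fun i j => if 0 ≤ x j then Alo i j else Ahi i j, bhi, ?_, fun i => ⟨hb i, le_rfl⟩, ?_⟩
    · intro i j
      dsimp only
      split_ifs
      exacts [⟨le_rfl, hA i j⟩, ⟨hA i j, le_rfl⟩]
    · intro i
      rw [sum_ite_nonneg_mul_eq (Alo i) (Ahi i) x]
      linarith [hrows i]
end
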